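/- Let X × Y be a topological product, (φ_i)_{i∈I} a partition of unity on X × Y subordinate to an open cover (W_i)_{i∈I}, and for each i let g_i : X × Y → ℝ be a function that is separately continuous on W_i and equal to 0 outside W_i, such that φ_i · g_i is separately continuous. Then f = Σ_{i∈I} φ_i g_i is a well-defined separately continuous function on X × Y, and if g_i|_{E ∩ W_i} = g|_{E ∩ W_i} for a fixed function g : E → ℝ on a set E ⊆ X × Y, then f|_E = g. -/
import Mathlib


open Set

theorem stmt14 {X Y : Type*} [TopologicalSpace X] [TopologicalSpace Y] {I : Type*}
    (W : I → Set (X × Y)) (hWopen : ∀ i, IsOpen (W i)) (hWcov : (⋃ i, W i) = univ)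
    (φ : I → X × Y → ℝ)
    (hφcont : ∀ i, Continuous (φ i))
    (hφ01 : ∀ i p, φ i p ∈ Icc (0:ℝ) 1)
    (hφsupp : ∀ i, tsupport (φ i) ⊆ W i)
    (hφlf : LocallyFinite fun i => Function.support (φ i))
    (hφsum : ∀ p, HasSum (fun i => φ i p) 1)
    (g : I → X × Y → ℝ)
    (hgsep : ∀ i, (∀ x : X, ContinuousOn (fun y => g i (x, y)) {y | (x, y) ∈ W i}) ∧
      (∀ y : Y, ContinuousOn (fun x => g i (x, y)) {x | (x, y) ∈ W i}))
    (hgzero : ∀ i, ∀ p ∉ W i, g i p = 0)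
    (hφgsep : ∀ i, (∀ x : X, Continuous fun y => φ i (x, y) * g i (x, y)) ∧
      (∀ y : Y, Continuous fun x => φ i (x, y) * g i (x, y)))
    (E : Set (X × Y)) (gE : X × Y → ℝ)
    (hgE : ∀ i, ∀ p ∈ E ∩ W i, g i p = gE p) :
    ∃ f : X × Y → ℝ,
      (∀ p, HasSum (fun i => φ i p * g i p) (f p)) ∧
      (∀ x : X, Continuous fun y => f (x, y)) ∧
      (∀ y : Y, Continuous fun x => f (x, y)) ∧
      (∀ p ∈ E, f p = gE p) := by
  classical
  refine ⟨fun p => ∑ᶠ i, φ i p * g i p, ?_, ?_, ?_, ?_⟩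
  · intro p
    have hfin : (Function.support fun i => φ i p * g i p).Finite := by
      refine Set.Finite.subset (hφlf.point_finite p) ?_
      intro i hi
      simp only [Function.mem_support] at hi ⊢
      intro h
      exact hi (by simp [h])
    show HasSum (fun i => φ i p * g i p) (∑ᶠ i, φ i p * g i p)
    rw [finsum_eq_sum _ hfin]
    exact hasSum_sum_of_ne_finset_zero (by
      intro i hi
      by_contra h
      exact hi (hfin.mem_toFinset.2 h))
  · intro x
    have hlf : LocallyFinite fun i => Function.support (fun y => φ i (x, y) * g i (x, y)) := by
      refine ((hφlf.preimage_continuous (Continuous.prodMk_right x))).subset fun i => ?_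
      intro y hy
      simp only [Function.mem_support, Set.mem_preimage, Function.mem_support] at hy ⊢
      intro h
      exact hy (by simp [h])
    exact continuous_finsum (fun i => (hφgsep i).1 x) hlf
  · intro y
    have hlf : LocallyFinite fun i => Function.support (fun x => φ i (x, y) * g i (x, y)) := by
      refine ((hφlf.preimage_continuous (show Continuous fun x : X => (x, y) from continuous_id.prodMk continuous_const))).subset
        fun i => ?_
      intro x hx
      simp only [Function.mem_support, Set.mem_preimage, Function.mem_support] at hx ⊢
      intro h
      exact hx (by simp [h])
    exact continuous_finsum (fun i => (hφgsep i).2 y) hlf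
  · intro p hp
    have heq : (fun i => φ i p * g i p) = fun i => φ i p * gE p := by
      funext i
      by_cases h : φ i p = 0
      · simp [h]
      · have hpW : p ∈ W i := hφsupp i (subset_closure (Function.mem_support.2 h))
        rw [hgE i p ⟨hp, hpW⟩]
    have h1 : HasSum (fun i => φ i p * g i p) (1 * gE p) := by
      rw [heq]; exact (hφsum p).mul_right _
    have h2 : HasSum (fun i => φ i p * g i p) (∑ᶠ i, φ i p * g i p) := by
      have hfin2 : (Function.support fun i => φ i p * g i p).Finite := by
        refine Set.Finite.subset (hφlf.point_finite p) ?_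
        intro i hi
        simp only [Function.mem_support] at hi ⊢
        intro h
        exact hi (by simp [h])
      rw [finsum_eq_sum _ hfin2]
      exact hasSum_sum_of_ne_finset_zero (by
        intro i hi
        by_contra h
        exact hi (hfin2.mem_toFinset.2 h))
    have := h1.unique h2
    simpa using this.symm
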